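/- arXiv:2304.11826 — 2 statements merged into one kernel-verified Lean document; each statement's English description precedes it below -/
import Mathlib

section
/- For every relaxed σ-scenario 𝒮 = (T,S,μ,τ_T,τ_S,σ), the LDT graph 𝔏(𝒮) is a subgraph of the undirected Fitch graph 𝔉_sym(T,H_𝒮), where H_𝒮 ⊆ E(T) is the set of HGT-edges of 𝒮; i.e., whenever τ_T(lca_T(a,b)) < τ_S(lca_S(σ(a),σ(b))) for two distinct leaves a,b of T, the path in T between a and b contains an HGT-edge of 𝒮. -/
/-- A planted phylogenetic rooted tree, encoded by a parent function on a
finite vertex set.  The root `0_T` is a fixed point of `parent`; every vertex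
reaches the root by iterating `parent`; the root has exactly one child
(`planted`); and every inner vertex (non-root vertex having a child) has at
least two children (`phylo`). -/
structure PPTree where
  V : Type
  [fintypeV : Fintype V]
  [decEqV : DecidableEq V]
  root : V
  parent : V → V
  parent_root : parent root = root
  reach : ∀ v : V, ∃ n : ℕ, parent^[n] v = root
  planted : ∃! v : V, v ≠ root ∧ parent v = root
  phylo : ∀ v : V, v ≠ root → (∃ u, parent u = v ∧ u ≠ v) →
      ∃ u w, parent u = v ∧ parent w = v ∧ u ≠ w ∧ u ≠ v ∧ w ≠ v

attribute [instance] PPTree.fintypeV PPTree.decEqV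

namespace PPTree

variable (T : PPTree)

/-- `T.le x y` means `x ⪯_T y`, i.e. `y` is an ancestor of `x` (or `x = y`). -/
def le (x y : T.V) : Prop := ∃ n : ℕ, T.parent^[n] x = y

/-- `T.lt x y` means `x ≺_T y`. -/
def lt (x y : T.V) : Prop := T.le x y ∧ x ≠ y

/-- Leaves are the `⪯_T`-minimal vertices, i.e. vertices without children. -/
def isLeaf (v : T.V) : Prop := ∀ u, T.parent u = v → u = v

/-- Inner vertices: neither leaves nor the planted root. -/
def inner (v : T.V) : Prop := v ≠ T.root ∧ ¬ T.isLeaf v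

/-- The last common ancestor of two vertices: the `⪯_T`-minimal common
ancestor. -/
noncomputable def lca (x y : T.V) : T.V :=
  @Classical.epsilon _ ⟨T.root⟩
    fun v => T.le x v ∧ T.le y v ∧ ∀ w, T.le x w → T.le y w → T.le v w

/-- The last common ancestor of a set of vertices. -/
noncomputable def lcaSet (A : Set T.V) : T.V :=
  @Classical.epsilon _ ⟨T.root⟩
    fun v => (∀ a ∈ A, T.le a v) ∧ ∀ w, (∀ a ∈ A, T.le a w) → T.le v w

/-- `ρ_T`, the unique child of the planted root. -/
noncomputable def rho : T.V := T.planted.choose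

theorem rho_ne_root : T.rho ≠ T.root := T.planted.choose_spec.1.1

/-- Edges of `T`, identified with their child endpoint: the vertex `v ≠ 0_T`
represents the edge `(parent v, v)`. -/
abbrev Edge := {v : T.V // v ≠ T.root}

/-- The union `V(T) ∪ E(T)`. -/
abbrev VE := T.V ⊕ T.Edge

/-- The ancestor order `⪯_T` extended to `V(T) ∪ E(T)`: for an edge `e = uv`
(`u` the parent of `v`), `x ⪯ e` iff `x ⪯ v`, `e ⪯ x` iff `u ⪯ x`, and
`e ⪯ f` iff the child endpoints are comparable accordingly. -/
def leVE : T.VE → T.VE → Prop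
  | Sum.inl x, Sum.inl y => T.le x y
  | Sum.inl x, Sum.inr e => T.le x e.1
  | Sum.inr e, Sum.inl y => T.le (T.parent e.1) y
  | Sum.inr e, Sum.inr f => T.le e.1 f.1

def ltVE (a b : T.VE) : Prop := T.leVE a b ∧ a ≠ b

/-- Two elements of `V(T) ∪ E(T)` are comparable. -/
def cmpVE (a b : T.VE) : Prop := T.leVE a b ∨ T.leVE b a

/-- Membership in `L(T)` for elements of `V(T) ∪ E(T)`. -/
def isLeafVE : T.VE → Prop
  | Sum.inl v => T.isLeaf v
  | Sum.inr _ => False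

/-- Map an element of `V(T) ∪ E(T)` to a vertex (an edge `uv` is sent to its
child endpoint `v`). -/
def toVertex : T.VE → T.V
  | Sum.inl v => v
  | Sum.inr e => e.1

end PPTree

/-- Axioms (R0)–(R3) of a reconciliation map `μ : V(T) → V(S) ∪ E(S)`. -/
structure IsRecon (T S : PPTree) (μ : T.V → S.VE) : Prop where
  R0 : ∀ x, μ x = Sum.inl S.root ↔ x = T.root
  R1 : ∀ x, S.isLeafVE (μ x) ↔ T.isLeaf x
  R2 : ∀ x y, T.lt y x → (∃ u, μ x = Sum.inl u) → (∃ v, μ y = Sum.inl v) → μ x ≠ μ y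
  R3 : ∀ x y, T.lt y x → ¬ S.ltVE (μ x) (μ y)

/-- A reconciliation is HGT-free if the images of the endpoints of every edge
of `T` are `⪯_S`-comparable. -/
def IsHGTFree (T S : PPTree) (μ : T.V → S.VE) : Prop :=
  ∀ v : T.V, v ≠ T.root → S.cmpVE (μ (T.parent v)) (μ v)

/-- `(T,S,μ,σ)` is a σ-reconciliation when `μ` restricted to `L(T)` equals
`σ`. -/
def SigmaCompat (T S : PPTree) (μ : T.V → S.VE) (σ : T.V → S.V) : Prop :=
  ∀ x, T.isLeaf x → μ x = Sum.inl (σ x)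

/-- A time map for `T`. -/
def IsTimeMap (T : PPTree) (τ : T.V → ℝ) : Prop :=
  ∀ x y, T.lt x y → τ x < τ y

/-- Axioms (S0)–(S3) of a relaxed scenario `(T,S,μ,τ_T,τ_S)`. -/
structure IsRelaxedScenario (T S : PPTree) (μ : T.V → S.VE)
    (τT : T.V → ℝ) (τS : S.V → ℝ) : Prop where
  timeT : IsTimeMap T τT
  timeS : IsTimeMap S τS
  S0 : ∀ x, μ x = Sum.inl S.root ↔ x = T.root
  S1 : ∀ x, S.isLeafVE (μ x) ↔ T.isLeaf x
  S2 : ∀ x v, μ x = Sum.inl v → τS v = τT x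
  S3 : ∀ x (e : S.Edge), μ x = Sum.inr e → τS e.1 < τT x ∧ τT x < τS (S.parent e.1)

/-! If no edge on the path from a leaf `a` up to `lca_T(a,b)` is an HGT-edge, then the time
maps force `μ(child) ⪯_S μ(parent)` along every edge of that path, so `σ(a) ⪯_S μ(lca_T(a,b))`,
and likewise for `b`. Hence `lca_S(σ(a),σ(b))` lies below `μ(lca_T(a,b))`, and (S2)/(S3) give
`τ_S(lca_S(σ(a),σ(b))) ≤ τ_T(lca_T(a,b))`, contradicting the LDT edge `ab`. -/

namespace PPTree

variable {T : PPTree}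

theorem le.refl (x : T.V) : T.le x x := ⟨0, rfl⟩

theorem le.trans {x y z : T.V} (hxy : T.le x y) (hyz : T.le y z) : T.le x z := by
  obtain ⟨n, rfl⟩ := hxy
  obtain ⟨m, rfl⟩ := hyz
  exact ⟨m + n, Function.iterate_add_apply _ m n x⟩

theorem le_parent (x : T.V) : T.le x (T.parent x) := ⟨1, rfl⟩

theorem lt.ne_root {x y : T.V} (h : T.lt x y) : x ≠ T.root := by
  rintro rfl
  obtain ⟨⟨n, hn⟩, hne⟩ := h
  exact hne (hn ▸ (Function.iterate_fixed T.parent_root n).symm)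

theorem parent_ne_self {v : T.V} (hv : v ≠ T.root) : T.parent v ≠ v := by
  intro h
  obtain ⟨n, hn⟩ := T.reach v
  exact hv (Function.iterate_fixed h n ▸ hn)

theorem le.parent_le_of_ne {x y : T.V} (h : T.le x y) (hne : x ≠ y) :
    T.le (T.parent x) y := by
  obtain ⟨_ | m, hm⟩ := h
  · exact absurd hm hne
  · exact ⟨m, hm⟩

-- The lca is reached from `a` after the least `n` with `b ⪯ parent^[n] a`.
theorem lca_spec (T : PPTree) (a b : T.V) :
    T.le a (T.lca a b) ∧ T.le b (T.lca a b) ∧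
      ∀ w, T.le a w → T.le b w → T.le (T.lca a b) w := by
  classical
  have hP : ∃ n, T.le b (T.parent^[n] a) := by
    obtain ⟨n, hn⟩ := T.reach a
    exact ⟨n, hn ▸ T.reach b⟩
  refine Classical.epsilon_spec
    (p := fun v => T.le a v ∧ T.le b v ∧ ∀ w, T.le a w → T.le b w → T.le v w)
    ⟨T.parent^[Nat.find hP] a, ⟨_, rfl⟩, Nat.find_spec hP, ?_⟩
  rintro w ⟨m, rfl⟩ hbw
  refine ⟨m - Nat.find hP, ?_⟩
  rw [← Function.iterate_add_apply, Nat.sub_add_cancel (Nat.find_min' hP hbw)]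

theorem le_lca_left (a b : T.V) : T.le a (T.lca a b) := (T.lca_spec a b).1

theorem le_lca_right (a b : T.V) : T.le b (T.lca a b) := (T.lca_spec a b).2.1

theorem lca_le {a b w : T.V} (ha : T.le a w) (hb : T.le b w) : T.le (T.lca a b) w :=
  (T.lca_spec a b).2.2 w ha hb

theorem leVE.refl (z : T.VE) : T.leVE z z := by
  rcases z with x | e
  exacts [le.refl x, le.refl e.1]

theorem leVE.trans {z₁ z₂ z₃ : T.VE} (h₁₂ : T.leVE z₁ z₂) (h₂₃ : T.leVE z₂ z₃) :
    T.leVE z₁ z₃ := by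
  rcases z₁ with x | e <;> rcases z₂ with y | f <;> rcases z₃ with z | g
  · exact le.trans h₁₂ h₂₃
  · exact le.trans h₁₂ h₂₃
  · exact le.trans h₁₂ ((le_parent f.1).trans h₂₃)
  · exact le.trans h₁₂ h₂₃
  · exact le.trans h₁₂ h₂₃
  · exact (le_parent e.1).trans (le.trans h₁₂ h₂₃)
  · by_cases hef : e.1 = f.1
    · show T.le (T.parent e.1) z
      rw [hef]
      exact h₂₃
    · exact (le.parent_le_of_ne h₁₂ hef).trans ((le_parent f.1).trans h₂₃)
  · exact le.trans h₁₂ h₂₃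

theorem inl_leVE_iff {x : T.V} {z : T.VE} :
    T.leVE (Sum.inl x) z ↔ T.le x (T.toVertex z) := by
  rcases z with y | e <;> rfl

end PPTree

theorem IsTimeMap.mono {T : PPTree} {τ : T.V → ℝ} (hτ : IsTimeMap T τ) {x y : T.V}
    (h : T.le x y) : τ x ≤ τ y := by
  by_cases hxy : x = y
  · rw [hxy]
  · exact (hτ x y ⟨h, hxy⟩).le

namespace IsRelaxedScenario

variable {T S : PPTree} {μ : T.V → S.VE} {τT : T.V → ℝ} {τS : S.V → ℝ}

theorem time_lt_of_ltVE (hsc : IsRelaxedScenario T S μ τT τS) {x y : T.V}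
    (h : S.ltVE (μ x) (μ y)) : τT x < τT y := by
  obtain ⟨hle, hne⟩ := h
  rcases hx : μ x with u | e <;> rcases hy : μ y with v | f <;> rw [hx, hy] at hle hne
  · have huv : S.lt u v := ⟨hle, fun h => hne (h ▸ rfl)⟩
    linarith [hsc.S2 x u hx, hsc.S2 y v hy, hsc.timeS u v huv]
  · linarith [hsc.S2 x u hx, (hsc.S3 y f hy).1, hsc.timeS.mono hle]
  · linarith [(hsc.S3 x e hx).2, hsc.S2 y v hy, hsc.timeS.mono hle]
  · have hef : e.1 ≠ f.1 := fun h => hne (congrArg Sum.inr (Subtype.ext h))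
    linarith [(hsc.S3 x e hx).2, (hsc.S3 y f hy).1,
      hsc.timeS.mono (hle.parent_le_of_ne hef)]

-- The other comparability, `μ (parent v) ≺ μ v`, would make `parent v` earlier than `v`.
theorem leVE_parent_of_cmpVE (hsc : IsRelaxedScenario T S μ τT τS) {v : T.V}
    (hv : v ≠ T.root) (h : S.cmpVE (μ (T.parent v)) (μ v)) :
    S.leVE (μ v) (μ (T.parent v)) := by
  rcases h with hup | hdown
  · by_cases heq : μ (T.parent v) = μ v
    · rw [heq]
      exact PPTree.leVE.refl _
    · have hlt : T.lt v (T.parent v) := ⟨T.le_parent v, (T.parent_ne_self hv).symm⟩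
      exact absurd (hsc.timeT v _ hlt) (hsc.time_lt_of_ltVE ⟨hup, heq⟩).not_gt
  · exact hdown

theorem leVE_of_le_of_forall_cmpVE (hsc : IsRelaxedScenario T S μ τT τS) {x y : T.V}
    (hxy : T.le x y) (H : ∀ w, T.le x w → T.lt w y → S.cmpVE (μ (T.parent w)) (μ w)) :
    S.leVE (μ x) (μ y) := by
  obtain ⟨n, hn⟩ := hxy
  induction n generalizing x with
  | zero => exact hn ▸ PPTree.leVE.refl _
  | succ m ih =>
    by_cases hxy : x = y
    · exact hxy ▸ PPTree.leVE.refl _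
    · have hlt : T.lt x y := ⟨⟨m + 1, hn⟩, hxy⟩
      exact (hsc.leVE_parent_of_cmpVE hlt.ne_root (H x (.refl x) hlt)).trans
        (ih (fun w hw => H w ((T.le_parent x).trans hw)) hn)

theorem tau_le_of_le_toVertex (hsc : IsRelaxedScenario T S μ τT τS) {s : S.V} {x : T.V}
    (h : S.le s (S.toVertex (μ x))) : τS s ≤ τT x := by
  rcases hx : μ x with u | e <;> rw [hx] at h
  · exact (hsc.timeS.mono h).trans_eq (hsc.S2 x u hx)
  · exact (hsc.timeS.mono h).trans (hsc.S3 x e hx).1.le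

end IsRelaxedScenario

theorem ldt_subgraph_of_fitch_general
    (T S : PPTree) (μ : T.V → S.VE) (τT : T.V → ℝ) (τS : S.V → ℝ)
    (σ : T.V → S.V)
    (hsc : IsRelaxedScenario T S μ τT τS) (hσ : SigmaCompat T S μ σ)
    (a b : T.V) (ha : T.isLeaf a) (hb : T.isLeaf b)
    (hLDT : τT (T.lca a b) < τS (S.lca (σ a) (σ b))) :
    ∃ w : T.V, w ≠ T.root ∧ (T.le a w ∨ T.le b w) ∧ T.lt w (T.lca a b) ∧
      ¬ S.cmpVE (μ (T.parent w)) (μ w) := by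
  by_contra! hcon
  set c := T.lca a b
  have hμa : S.leVE (Sum.inl (σ a)) (μ c) := hσ a ha ▸ hsc.leVE_of_le_of_forall_cmpVE
    (T.le_lca_left a b) fun w haw hw => hcon w hw.ne_root (Or.inl haw) hw
  have hμb : S.leVE (Sum.inl (σ b)) (μ c) := hσ b hb ▸ hsc.leVE_of_le_of_forall_cmpVE
    (T.le_lca_right a b) fun w hbw hw => hcon w hw.ne_root (Or.inr hbw) hw
  rw [PPTree.inl_leVE_iff] at hμa hμb
  linarith [hsc.tau_le_of_le_toVertex (S.lca_le hμa hμb)]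

/-- For every relaxed σ-scenario
`𝒮 = (T,S,μ,τ_T,τ_S,σ)`, the LDT graph `𝔏(𝒮)` is a subgraph of the
undirected Fitch graph `𝔉_sym(T,H_𝒮)`: whenever
`τ_T(lca_T(a,b)) < τ_S(lca_S(σ(a),σ(b)))` for distinct leaves `a,b` of `T`,
the path in `T` between `a` and `b` contains an HGT-edge of `𝒮` (edges are
identified with their child endpoints `w`; the edges of the path between `a`
and `b` are those with `a ⪯ w` or `b ⪯ w`, and `w ≺ lca_T(a,b)`). -/
theorem ldt_subgraph_of_fitch
    (T S : PPTree) (μ : T.V → S.VE) (τT : T.V → ℝ) (τS : S.V → ℝ)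
    (σ : T.V → S.V)
    (hsc : IsRelaxedScenario T S μ τT τS) (hσ : SigmaCompat T S μ σ)
    (a b : T.V) (ha : T.isLeaf a) (hb : T.isLeaf b) (hab : a ≠ b)
    (hLDT : τT (T.lca a b) < τS (S.lca (σ a) (σ b))) :
    ∃ w : T.V, w ≠ T.root ∧ (T.le a w ∨ T.le b w) ∧ T.lt w (T.lca a b) ∧
      ¬ S.cmpVE (μ (T.parent w)) (μ w) :=
  ldt_subgraph_of_fitch_general T S μ τT τS σ hsc hσ a b ha hb hLDT
end

section
/- For every generic relaxed σ-scenario 𝒮 = (T,S,μ,τ_T,τ_S,σ), the strict quasi-orthology graph coincides with the equal-divergence-time graph and the chain Θs(𝒮) ⊆ Ψs(𝒮) = 𝔈(𝒮) ⊆ Ψw(𝒮) of subgraph inclusions holds. -/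
/-- The path in `T` between the leaves `x` and `y` contains an HGT-edge of
the scenario (edges are identified with their child endpoints `w`; the edges
of the path between `x` and `y` are those with `x ⪯ w` or `y ⪯ w`, and
`w ≺ lca_T(x,y)`; such an edge is an HGT-edge if the images under `μ` of its
endpoints are `⪯_S`-incomparable). -/
def PathHGT (T S : PPTree) (μ : T.V → S.VE) (x y : T.V) : Prop :=
  ∃ w : T.V, (T.le x w ∨ T.le y w) ∧ T.lt w (T.lca x y) ∧
    ¬ S.cmpVE (μ (T.parent w)) (μ w)

/-- `x` and `y` are weak quasi-orthologs: `μ(lca_T(x,y)) ∈ V⁰(S)`. -/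
def WeakQuasiOrtholog (T S : PPTree) (μ : T.V → S.VE) (x y : T.V) : Prop :=
  T.isLeaf x ∧ T.isLeaf y ∧ x ≠ y ∧
    ∃ v : S.V, μ (T.lca x y) = Sum.inl v ∧ v ≠ S.root ∧ ¬ S.isLeaf v

/-- `x` and `y` are weak orthologs: weak quasi-orthologs such that no
HGT-edge lies on the path between `x` and `y`. -/
def WeakOrtholog (T S : PPTree) (μ : T.V → S.VE) (x y : T.V) : Prop :=
  WeakQuasiOrtholog T S μ x y ∧ ¬ PathHGT T S μ x y

/-- `x` and `y` are strict quasi-orthologs: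
`μ(lca_T(x,y)) = lca_S(σ(x),σ(y))`. -/
def StrictQuasiOrtholog (T S : PPTree) (μ : T.V → S.VE) (σ : T.V → S.V)
    (x y : T.V) : Prop :=
  T.isLeaf x ∧ T.isLeaf y ∧ x ≠ y ∧
    μ (T.lca x y) = Sum.inl (S.lca (σ x) (σ y))

/-- `x` and `y` are strict orthologs: strict quasi-orthologs such that no
HGT-edge lies on the path between `x` and `y`. -/
def StrictOrtholog (T S : PPTree) (μ : T.V → S.VE) (σ : T.V → S.V)
    (x y : T.V) : Prop :=
  StrictQuasiOrtholog T S μ σ x y ∧ ¬ PathHGT T S μ x y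

/-- Edge `xy` of the equal-divergence-time (EDT) graph `𝔈(𝒮)`: `x,y` are
distinct leaves with `τ_T(lca_T(x,y)) = τ_S(lca_S(σ(x),σ(y)))`. -/
def EDTEdge (T S : PPTree) (τT : T.V → ℝ) (τS : S.V → ℝ) (σ : T.V → S.V)
    (x y : T.V) : Prop :=
  T.isLeaf x ∧ T.isLeaf y ∧ x ≠ y ∧
    τT (T.lca x y) = τS (S.lca (σ x) (σ y))

/-- A relaxed scenario is generic if `τ_T(lca_T(x,y)) = τ_S(u)` for leaves
`x,y` of `T` and `u ∈ V⁰(S)` implies `μ(lca_T(x,y)) = u`. -/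
def IsGeneric (T S : PPTree) (μ : T.V → S.VE) (τT : T.V → ℝ)
    (τS : S.V → ℝ) : Prop :=
  ∀ x y : T.V, T.isLeaf x → T.isLeaf y →
    ∀ u : S.V, u ≠ S.root → ¬ S.isLeaf u →
      τT (T.lca x y) = τS u → μ (T.lca x y) = Sum.inl u

namespace PPTree

variable (T : PPTree)

lemma iterate_parent_root (n : ℕ) : T.parent^[n] T.root = T.root :=
  Function.iterate_fixed T.parent_root n

lemma le_root (x : T.V) : T.le x T.root := T.reach x

lemma eq_of_le_of_isLeaf {x y : T.V} (hy : T.isLeaf y) (h : T.le x y) : x = y := by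
  obtain ⟨n, hn⟩ := h
  induction n generalizing x with
  | zero => exact hn
  | succ n ih => exact hy x (ih (by rwa [Function.iterate_succ_apply] at hn))

lemma root_not_isLeaf : ¬ T.isLeaf T.root := by
  obtain ⟨v, ⟨hv, hpv⟩, -⟩ := T.planted
  exact fun h => hv (h v hpv)

lemma ne_root_of_isLeaf {x : T.V} (hx : T.isLeaf x) : x ≠ T.root := by
  rintro rfl
  exact T.root_not_isLeaf hx

lemma le_rho {x : T.V} (hx : x ≠ T.root) : T.le x T.rho := by
  obtain ⟨n, hn⟩ := T.reach x
  induction n generalizing x with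
  | zero => exact absurd hn hx
  | succ n ih =>
    rw [Function.iterate_succ_apply] at hn
    by_cases hpx : T.parent x = T.root
    · exact ⟨0, T.planted.unique ⟨hx, hpx⟩ T.planted.choose_spec.1⟩
    · obtain ⟨m, hm⟩ := ih hpx hn
      exact ⟨m + 1, by rwa [Function.iterate_succ_apply]⟩

lemma exists_lca (x y : T.V) :
    ∃ v, T.le x v ∧ T.le y v ∧ ∀ w, T.le x w → T.le y w → T.le v w := by
  classical
  -- the first ancestor of `x` that lies above `y`
  have hex : ∃ n : ℕ, T.le y (T.parent^[n] x) := by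
    obtain ⟨n, hn⟩ := T.reach x
    exact ⟨n, hn ▸ T.le_root y⟩
  refine ⟨T.parent^[Nat.find hex] x, ⟨Nat.find hex, rfl⟩, Nat.find_spec hex, ?_⟩
  rintro w ⟨m, rfl⟩ hyw
  rcases le_or_gt (Nat.find hex) m with h | h
  · exact ⟨m - Nat.find hex, by rw [← Function.iterate_add_apply, Nat.sub_add_cancel h]⟩
  · exact absurd hyw (Nat.find_min hex h)

lemma lca_spec_s19 (x y : T.V) :
    T.le x (T.lca x y) ∧ T.le y (T.lca x y) ∧
      ∀ w, T.le x w → T.le y w → T.le (T.lca x y) w :=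
  haveI : Nonempty T.V := ⟨T.root⟩
  Classical.epsilon_spec (T.exists_lca x y)

lemma lca_ne_root {x y : T.V} (hx : x ≠ T.root) (hy : y ≠ T.root) :
    T.lca x y ≠ T.root := by
  intro h
  obtain ⟨n, hn⟩ := h ▸ (T.lca_spec_s19 x y).2.2 T.rho (T.le_rho hx) (T.le_rho hy)
  exact T.rho_ne_root (hn ▸ T.iterate_parent_root n)

lemma lca_lt_root {x y : T.V} (hx : x ≠ T.root) (hy : y ≠ T.root) :
    T.lt (T.lca x y) T.root :=
  ⟨T.le_root _, T.lca_ne_root hx hy⟩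

lemma lt_lca_of_isLeaf {x y : T.V} (hx : T.isLeaf x) (hxy : x ≠ y) :
    T.lt x (T.lca x y) := by
  refine ⟨(T.lca_spec_s19 x y).1, fun h => hxy ?_⟩
  exact (T.eq_of_le_of_isLeaf hx (h ▸ (T.lca_spec_s19 x y).2.1)).symm

lemma inner_lca_of_isLeaf {x y : T.V} (hx : T.isLeaf x) (hy : T.isLeaf y) (hxy : x ≠ y) :
    T.inner (T.lca x y) :=
  ⟨T.lca_ne_root (T.ne_root_of_isLeaf hx) (T.ne_root_of_isLeaf hy), fun h =>
    (T.lt_lca_of_isLeaf hx hxy).2 (T.eq_of_le_of_isLeaf h (T.lca_spec_s19 x y).1)⟩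

end PPTree

namespace IsRelaxedScenario

variable {T S : PPTree} {μ : T.V → S.VE} {τT : T.V → ℝ} {τS : S.V → ℝ}

lemma tau_root (hsc : IsRelaxedScenario T S μ τT τS) : τS S.root = τT T.root :=
  hsc.S2 _ _ ((hsc.S0 _).2 rfl)

lemma inner_of_map_eq_inl (hsc : IsRelaxedScenario T S μ τT τS) {x : T.V} {v : S.V}
    (hx : T.inner x) (h : μ x = Sum.inl v) : S.inner v :=
  ⟨fun hv => hx.1 ((hsc.S0 x).1 (hv ▸ h)), fun hv => hx.2 ((hsc.S1 x).1 (h ▸ hv))⟩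

lemma inner_lca_of_edtEdge (hsc : IsRelaxedScenario T S μ τT τS) {σ : T.V → S.V}
    (hσ : SigmaCompat T S μ σ) {x y : T.V} (h : EDTEdge T S τT τS σ x y) :
    S.inner (S.lca (σ x) (σ y)) := by
  obtain ⟨hx, hy, hxy, heq⟩ := h
  refine ⟨fun hroot => ?_, fun hleaf => ?_⟩
  · have hlt := hsc.timeT _ _
      (T.lca_lt_root (T.ne_root_of_isLeaf hx) (T.ne_root_of_isLeaf hy))
    rw [heq, hroot, hsc.tau_root] at hlt
    exact lt_irrefl _ hlt
  · have hσx := S.eq_of_le_of_isLeaf hleaf (S.lca_spec_s19 (σ x) (σ y)).1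
    have hlt := hsc.timeT _ _ (T.lt_lca_of_isLeaf hx hxy)
    rw [heq, ← hσx, hsc.S2 x (σ x) (hσ x hx)] at hlt
    exact lt_irrefl _ hlt

lemma strictQuasiOrtholog_iff_edtEdge (hsc : IsRelaxedScenario T S μ τT τS)
    {σ : T.V → S.V} (hσ : SigmaCompat T S μ σ) (hgen : IsGeneric T S μ τT τS) {x y : T.V} :
    StrictQuasiOrtholog T S μ σ x y ↔ EDTEdge T S τT τS σ x y := by
  refine ⟨fun ⟨hx, hy, hxy, hμ⟩ => ⟨hx, hy, hxy, (hsc.S2 _ _ hμ).symm⟩, fun h => ?_⟩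
  have hinner := hsc.inner_lca_of_edtEdge hσ h
  obtain ⟨hx, hy, hxy, heq⟩ := h
  exact ⟨hx, hy, hxy, hgen x y hx hy _ hinner.1 hinner.2 heq⟩

lemma weakQuasiOrtholog_of_strictQuasiOrtholog (hsc : IsRelaxedScenario T S μ τT τS)
    {σ : T.V → S.V} {x y : T.V} (h : StrictQuasiOrtholog T S μ σ x y) :
    WeakQuasiOrtholog T S μ x y := by
  obtain ⟨hx, hy, hxy, hμ⟩ := h
  exact ⟨hx, hy, hxy, _, hμ, hsc.inner_of_map_eq_inl (T.inner_lca_of_isLeaf hx hy hxy) hμ⟩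

end IsRelaxedScenario

/-- For every generic relaxed σ-scenario
`𝒮 = (T,S,μ,τ_T,τ_S,σ)`, the strict quasi-orthology graph coincides with
the EDT graph, and `Θs(𝒮) ⊆ Ψs(𝒮) = 𝔈(𝒮) ⊆ Ψw(𝒮)`. -/
theorem generic_scenario_edt_chain
    (T S : PPTree) (μ : T.V → S.VE) (τT : T.V → ℝ) (τS : S.V → ℝ)
    (σ : T.V → S.V)
    (hsc : IsRelaxedScenario T S μ τT τS) (hσ : SigmaCompat T S μ σ)
    (hgen : IsGeneric T S μ τT τS) :
    (∀ x y : T.V, StrictQuasiOrtholog T S μ σ x y ↔ EDTEdge T S τT τS σ x y) ∧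
    (∀ x y : T.V, StrictOrtholog T S μ σ x y → StrictQuasiOrtholog T S μ σ x y) ∧
    (∀ x y : T.V, StrictQuasiOrtholog T S μ σ x y → WeakQuasiOrtholog T S μ x y) :=
  ⟨fun _ _ => hsc.strictQuasiOrtholog_iff_edtEdge hσ hgen, fun _ _ h => h.1,
    fun _ _ => hsc.weakQuasiOrtholog_of_strictQuasiOrtholog⟩
end
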